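/- arXiv:1808.01619 — 3 statements merged into one kernel-verified Lean document; each statement's English description precedes it below -/
import Mathlib

section
/- Let Θ ⊂ ℝ^d be a finite set satisfying Condition A. Then the additive subgroup of ℝ^d generated by Θ is discrete; that is, there exists r > 0 such that the only element of this subgroup in the open ball of radius r around 0 is 0. -/
/-- Condition A: every finite family of elements of `Θ` that is linearly dependent over `ℝ`
admits a nontrivial integer linear dependence. -/
def ConditionA {d : ℕ} (Θ : Set (EuclideanSpace ℝ (Fin d))) : Prop :=
  ∀ (m : ℕ) (θ : Fin m → EuclideanSpace ℝ (Fin d)),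
    (∀ i, θ i ∈ Θ) → ¬ LinearIndependent ℝ θ →
      ∃ n : Fin m → ℤ, (∃ i, n i ≠ 0) ∧ ∑ i, (n i : ℝ) • θ i = 0

/-!
Choose a maximal linearly independent subset `t ⊆ Θ`. Each `θ ∈ Θ` lies in the real span of `t`,
so `θ, t` is linearly dependent and Condition A gives an integer relation in which `θ` must occur
with a nonzero coefficient `k`; hence `k • θ ∈ span ℤ t`. As `Θ` is finite, one common `N ≠ 0`
sends the whole group generated by `Θ` into `span ℤ t`, which is discrete because `t` extends to a
real basis. Since `x ↦ N • x` only scales norms by `|N|`, the group generated by `Θ` is discrete.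
-/

open Submodule

lemma AddSubgroup.exists_pos_forall_norm_lt_imp_eq_zero {E : Type*} [SeminormedAddCommGroup E]
    (L : AddSubgroup E) [DiscreteTopology L] :
    ∃ r > (0 : ℝ), ∀ x ∈ L, ‖x‖ < r → x = 0 := by
  obtain ⟨r, hr, hball⟩ := Metric.isOpen_iff.mp (isOpen_discrete {(0 : L)}) 0 rfl
  refine ⟨r, hr, fun x hx hxr => ?_⟩
  have : (⟨x, hx⟩ : L) = 0 := hball (mem_ball_zero_iff.mpr hxr)
  exact congrArg Subtype.val this

lemma LinearIndepOn.exists_pos_forall_mem_span_int_norm_lt_imp_eq_zero {E : Type*}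
    [NormedAddCommGroup E] [NormedSpace ℝ E] [FiniteDimensional ℝ E] {t : Set E}
    (ht : LinearIndepOn ℝ id t) :
    ∃ r > (0 : ℝ), ∀ x ∈ span ℤ t, ‖x‖ < r → x = 0 := by
  let b := Module.Basis.extend ht
  have : Finite (ht.extend (Set.subset_univ t)) := Module.Finite.finite_basis b
  obtain ⟨r, hr, hL⟩ := (span ℤ (Set.range b)).toAddSubgroup.exists_pos_forall_norm_lt_imp_eq_zero
  have hts : span ℤ t ≤ span ℤ (Set.range b) := by
    refine span_mono ?_
    rw [Module.Basis.range_extend]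
    exact ht.subset_extend _
  exact ⟨r, hr, fun x hx => hL x (hts hx)⟩

lemma exists_pos_forall_norm_lt_imp_eq_zero_of_zsmul_mem {E : Type*} [NormedAddCommGroup E]
    [NormedSpace ℝ E] {H L : AddSubgroup E} {N : ℤ} (hN : N ≠ 0) (hHL : ∀ x ∈ H, N • x ∈ L)
    (hL : ∃ r > (0 : ℝ), ∀ x ∈ L, ‖x‖ < r → x = 0) :
    ∃ r > (0 : ℝ), ∀ x ∈ H, ‖x‖ < r → x = 0 := by
  obtain ⟨r, hr, hL⟩ := hL
  have hN' : (0 : ℝ) < |(N : ℝ)| := by positivity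
  refine ⟨r / |(N : ℝ)|, by positivity, fun x hx hxr => ?_⟩
  have hNx : ‖N • x‖ < r := by
    rw [← Int.cast_smul_eq_zsmul ℝ, norm_smul, Real.norm_eq_abs]
    exact (lt_div_iff₀' hN').mp hxr
  have : (N : ℝ) • x = 0 := by rw [Int.cast_smul_eq_zsmul]; exact hL _ (hHL x hx) hNx
  exact (smul_eq_zero.mp this).resolve_left (Int.cast_ne_zero.mpr hN)

lemma AddSubgroup.exists_zsmul_mem_of_mem_closure {G : Type*} [AddCommGroup G]
    {L : AddSubgroup G} {s : Set G} (hs : s.Finite) (hsL : ∀ x ∈ s, ∃ k : ℤ, k ≠ 0 ∧ k • x ∈ L) :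
    ∃ N : ℤ, N ≠ 0 ∧ ∀ x ∈ closure s, N • x ∈ L := by
  suffices ∃ N : ℤ, N ≠ 0 ∧ ∀ x ∈ s, N • x ∈ L by
    obtain ⟨N, hN, hsN⟩ := this
    exact ⟨N, hN, fun x hx => (closure_le (L.comap (zsmulAddGroupHom (α := G) N))).mpr hsN hx⟩
  induction s, hs using Set.Finite.induction_on with
  | empty => exact ⟨1, one_ne_zero, by simp⟩
  | @insert a s _ _ ih =>
    obtain ⟨k, hk, hka⟩ := hsL a (Set.mem_insert a s)
    obtain ⟨N, hN, hsN⟩ := ih fun x hx => hsL x (Set.mem_insert_of_mem a hx)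
    refine ⟨N * k, mul_ne_zero hN hk, ?_⟩
    rintro x (rfl | hx)
    · rw [mul_smul]; exact L.zsmul_mem hka N
    · rw [mul_comm, mul_smul]; exact L.zsmul_mem (hsN x hx) k

lemma LinearIndependent.zsmul_mem_span_int_of_sum_finCons_eq_zero {K V : Type*} [Ring K]
    [CharZero K] [AddCommGroup V] [Module K V] {m : ℕ} {g : Fin m → V}
    (hg : LinearIndependent K g) {θ : V} {n : Fin (m + 1) → ℤ} (hn : ∃ i, n i ≠ 0)
    (hsum : ∑ i, (n i : K) • (Fin.cons θ g : Fin (m + 1) → V) i = 0) :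
    n 0 ≠ 0 ∧ n 0 • θ ∈ span ℤ (Set.range g) := by
  simp only [Fin.sum_univ_succ, Fin.cons_zero, Fin.cons_succ, Int.cast_smul_eq_zsmul] at hsum
  have hθ : n 0 • θ = -∑ i : Fin m, n i.succ • g i := eq_neg_of_add_eq_zero_left hsum
  refine ⟨fun h0 => ?_, hθ ▸ neg_mem (sum_mem fun i _ => smul_mem _ _ (subset_span ⟨i, rfl⟩))⟩
  rw [h0, zero_smul, zero_add] at hsum
  have htail : ∀ i : Fin m, (n i.succ : K) = 0 := Fintype.linearIndependent_iff.mp hg _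
    (by simpa only [Int.cast_smul_eq_zsmul] using hsum)
  obtain ⟨i, hi⟩ := hn
  cases i using Fin.cases with
  | zero => exact hi h0
  | succ i => exact hi (Int.cast_eq_zero.mp (htail i))

lemma ConditionA.exists_zsmul_mem_span_int {d : ℕ} {Θ : Set (EuclideanSpace ℝ (Fin d))}
    (hA : ConditionA Θ) {t : Set (EuclideanSpace ℝ (Fin d))} (hts : t ⊆ Θ) (ht : t.Finite)
    (hli : LinearIndepOn ℝ id t) {θ : EuclideanSpace ℝ (Fin d)} (hθ : θ ∈ Θ)
    (hθt : θ ∈ span ℝ t) : ∃ k : ℤ, k ≠ 0 ∧ k • θ ∈ span ℤ t := by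
  obtain ⟨m, g, rfl⟩ := ht.fin_embedding
  have hg : LinearIndependent ℝ g := (linearIndepOn_id_range_iff g.injective).mp hli
  have hdep : ¬ LinearIndependent ℝ (Fin.cons θ g : Fin (m + 1) → _) := by
    rw [linearIndependent_finCons]
    exact fun h => h.2 hθt
  have hmem : ∀ i, (Fin.cons θ g : Fin (m + 1) → _) i ∈ Θ :=
    Fin.cases hθ fun i => hts ⟨i, rfl⟩
  obtain ⟨n, hn, hsum⟩ := hA (m + 1) _ hmem hdep
  exact ⟨n 0, hg.zsmul_mem_span_int_of_sum_finCons_eq_zero hn hsum⟩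

/-- For a finite set `Θ` satisfying Condition A, the additive subgroup of `ℝ^d` generated
by `Θ` is discrete. -/
theorem stmt_3 (d : ℕ) (Θ : Set (EuclideanSpace ℝ (Fin d))) (hfin : Θ.Finite)
    (hA : ConditionA Θ) :
    ∃ r > (0 : ℝ), ∀ x ∈ AddSubgroup.closure Θ, ‖x‖ < r → x = 0 := by
  obtain ⟨t, hts, hspan, hli⟩ := exists_linearIndependent ℝ Θ
  have hmult : ∀ θ ∈ Θ, ∃ k : ℤ, k ≠ 0 ∧ k • θ ∈ (span ℤ t).toAddSubgroup := fun θ hθ =>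
    hA.exists_zsmul_mem_span_int hts (hfin.subset hts) hli hθ (hspan ▸ subset_span hθ)
  obtain ⟨N, hN, hNΘ⟩ := AddSubgroup.exists_zsmul_mem_of_mem_closure hfin hmult
  exact exists_pos_forall_norm_lt_imp_eq_zero_of_zsmul_mem hN hNΘ
    (LinearIndepOn.exists_pos_forall_mem_span_int_norm_lt_imp_eq_zero hli)
end

section
/- Let Γ be a discrete additive subgroup of ℝ^d whose ℝ-linear span is all of ℝ^d, let F ⊂ ℝ^d be a finite set, and suppose that Θ := F + Γ = {f + γ : f ∈ F, γ ∈ Γ} satisfies Condition A. Then the additive subgroup of ℝ^d generated by Θ is discrete. -/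
open Pointwise

/-!
Choose a maximal `ℝ`-linearly independent family `s ⊆ Θ`. Its integer span `L` is discrete, and
Condition A, applied to `s` together with any `θ ∈ Θ`, forces the coefficient of `θ` in the integer
dependence to be nonzero: every element of `Θ` has a nonzero multiple in `L`. The group generated
by `Θ = F + Γ` is `⟨F⟩ + Γ`, which is finitely generated because the discrete group `Γ` is, so a
single `n ≠ 0` works for all of it. Then `x ↦ n • x` embeds it into `L`, hence it is discrete.
-/

open Submodule Set
open scoped nonZeroDivisors

namespace Submodule

section Saturation

variable {R M : Type*} [CommRing R] [AddCommGroup M] [Module R M]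

def saturation (L : Submodule R M) : Submodule R M :=
  (torsion R (M ⧸ L)).comap L.mkQ

theorem mem_saturation {L : Submodule R M} {x : M} :
    x ∈ L.saturation ↔ ∃ a : R⁰, a • x ∈ L := by
  simp only [saturation, mem_comap, mem_torsion_iff, mkQ_apply, Submonoid.smul_def,
    ← Quotient.mk_smul, Quotient.mk_eq_zero]

theorem FG.exists_smul_mem_of_le_saturation {L H : Submodule R M} (hH : H.FG)
    (hHL : H ≤ L.saturation) : ∃ a : R⁰, ∀ x ∈ H, a • x ∈ L := by
  have : Module.Finite R (H.map L.mkQ) := Module.Finite.of_fg (hH.map _)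
  have htors : Module.IsTorsion R (H.map L.mkQ) := by
    rintro ⟨_, x, hx, rfl⟩
    obtain ⟨a, ha⟩ := mem_saturation.1 (hHL hx)
    exact ⟨a, Subtype.ext ((Quotient.mk_eq_zero L).2 ha)⟩
  obtain ⟨a, ha, ha₀⟩ := annihilator_top_inter_nonZeroDivisors htors
  refine ⟨⟨a, ha₀⟩, fun x hx => (Quotient.mk_eq_zero L).1 ?_⟩
  have := mem_annihilator.1 ha ⟨L.mkQ x, mem_map_of_mem hx⟩ mem_top
  exact congrArg Subtype.val this

end Saturation

theorem span_add_eq_sup {R M : Type*} [Ring R] [AddCommGroup M] [Module R M] {s : Set M}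
    (hs : s.Nonempty) (N : Submodule R M) : span R (s + (N : Set M)) = span R s ⊔ N := by
  obtain ⟨a, ha⟩ := hs
  refine le_antisymm (span_le.2 ?_)
    (sup_le (span_mono fun x hx => ⟨x, hx, 0, N.zero_mem, add_zero x⟩) ?_)
  · rintro _ ⟨x, hx, n, hn, rfl⟩
    exact add_mem_sup (subset_span hx) hn
  · intro n hn
    have h₁ : a + n ∈ span R (s + (N : Set M)) := subset_span ⟨a, ha, n, hn, rfl⟩
    have h₂ : a ∈ span R (s + (N : Set M)) := subset_span ⟨a, ha, 0, N.zero_mem, add_zero a⟩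
    simpa using sub_mem h₁ h₂

end Submodule

section Discrete

variable {E : Type*} [NormedAddCommGroup E]

theorem Submodule.discreteTopology_iff_norm (L : Submodule ℤ E) :
    DiscreteTopology L ↔ ∃ r > (0 : ℝ), ∀ x ∈ L, ‖x‖ < r → x = 0 := by
  simp only [discreteTopology_iff_isOpen_singleton_zero, Metric.isOpen_singleton_iff,
    Subtype.forall, ZeroMemClass.coe_zero, dist_zero_right, Subtype.ext_iff]
  rfl

variable [NormedSpace ℝ E]

theorem Submodule.discreteTopology_of_zsmul_mem {H L : Submodule ℤ E} [DiscreteTopology L]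
    {n : ℤ} (hn : n ≠ 0) (hHL : ∀ x ∈ H, n • x ∈ L) : DiscreteTopology H := by
  refine DiscreteTopology.of_continuous_injective (f := fun x : H => (⟨n • x, hHL x x.2⟩ : L))
    (by fun_prop) fun x y hxy => ?_
  have hxy : (n : ℝ) • (x : E) = (n : ℝ) • (y : E) := by
    simpa only [Int.cast_smul_eq_zsmul, Subtype.ext_iff] using hxy
  exact Subtype.ext (smul_right_injective E (Int.cast_ne_zero.2 hn) hxy)

variable [FiniteDimensional ℝ E]

theorem LinearIndependent.discreteTopology_span_int {ι : Type*} {v : ι → E}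
    (hv : LinearIndependent ℝ v) : DiscreteTopology (span ℤ (range v)) := by
  let b := Module.Basis.extend hv.linearIndepOn_id
  have : Finite (hv.linearIndepOn_id.extend (subset_univ _)) := b.linearIndependent.finite
  have hle : span ℤ (range v) ≤ span ℤ (range b) := by
    rw [Module.Basis.range_extend]
    exact span_mono (Module.Basis.subset_extend _)
  exact DiscreteTopology.of_subset (inferInstance : DiscreteTopology (span ℤ (range b))) hle

end Discrete

theorem mem_saturation_span_int_of_sum_finCons_eq_zero {K E : Type*} [DivisionRing K] [CharZero K]
    [AddCommGroup E] [Module K E] {k : ℕ} {v : Fin k → E} (hv : LinearIndependent K v) {θ : E}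
    {n : Fin (k + 1) → ℤ} (hn : ∃ i, n i ≠ 0)
    (hsum : ∑ i, (n i : K) • (Fin.cons θ v : Fin (k + 1) → E) i = 0) :
    θ ∈ (span ℤ (range v)).saturation := by
  rw [Fin.sum_univ_succ] at hsum
  simp only [Fin.cons_zero, Fin.cons_succ] at hsum
  have hn₀ : n 0 ≠ 0 := by
    intro hn₀
    rw [hn₀, Int.cast_zero, zero_smul, zero_add] at hsum
    have hsucc := Fintype.linearIndependent_iff.1 hv _ hsum
    obtain ⟨i, hi⟩ := hn
    refine hi (Fin.cases hn₀ (fun j => ?_) i)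
    exact_mod_cast hsucc j
  have hθ : n 0 • θ = -∑ i : Fin k, n i.succ • v i := by
    simpa only [Int.cast_smul_eq_zsmul, eq_neg_iff_add_eq_zero] using hsum
  refine mem_saturation.2 ⟨⟨n 0, mem_nonZeroDivisors_of_ne_zero hn₀⟩, ?_⟩
  rw [Submonoid.smul_def, hθ]
  exact neg_mem (sum_mem fun i _ => zsmul_mem (subset_span (mem_range_self i)) _)

namespace ConditionA

variable {d : ℕ} {Θ : Set (EuclideanSpace ℝ (Fin d))}

theorem mem_saturation_span_int (hA : ConditionA Θ) {ι : Type*} {v : ι → EuclideanSpace ℝ (Fin d)}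
    (hvΘ : ∀ i, v i ∈ Θ) (hv : LinearIndependent ℝ v) {θ : EuclideanSpace ℝ (Fin d)}
    (hθΘ : θ ∈ Θ) (hθ : θ ∈ span ℝ (range v)) : θ ∈ (span ℤ (range v)).saturation := by
  have := hv.finite
  obtain ⟨k, ⟨e⟩⟩ := Finite.exists_equiv_fin ι
  have hrange : range (v ∘ e.symm) = range v := e.symm.surjective.range_comp v
  have hv' : LinearIndependent ℝ (v ∘ e.symm) := hv.comp _ e.symm.injective
  obtain ⟨n, hn, hsum⟩ := hA (k + 1) (Fin.cons θ (v ∘ e.symm))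
    (Fin.cases hθΘ fun i => hvΘ _) (by rw [linearIndependent_finCons, hrange]; tauto)
  rw [← hrange]
  exact mem_saturation_span_int_of_sum_finCons_eq_zero hv' hn hsum

theorem exists_discrete_subset_saturation (hA : ConditionA Θ) :
    ∃ L : Submodule ℤ (EuclideanSpace ℝ (Fin d)), DiscreteTopology L ∧ Θ ⊆ L.saturation := by
  obtain ⟨s, hsΘ, hspan, hs⟩ := exists_linearIndependent ℝ Θ
  refine ⟨span ℤ s, ?_, fun θ hθ => ?_⟩
  · have := hs.discreteTopology_span_int
    rwa [Subtype.range_coe] at this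
  · have := hA.mem_saturation_span_int (fun i => hsΘ i.2) hs hθ
      (by rw [Subtype.range_coe, hspan]; exact subset_span hθ)
    rwa [Subtype.range_coe] at this

end ConditionA

theorem stmt_4_general (d : ℕ) (Γ : AddSubgroup (EuclideanSpace ℝ (Fin d)))
    (hdisc : ∃ r > (0 : ℝ), ∀ x ∈ Γ, ‖x‖ < r → x = 0)
    (F : Set (EuclideanSpace ℝ (Fin d))) (hF : F.Finite)
    (hA : ConditionA (F + (Γ : Set (EuclideanSpace ℝ (Fin d))))) :
    ∃ r > (0 : ℝ), ∀ x ∈ AddSubgroup.closure (F + (Γ : Set (EuclideanSpace ℝ (Fin d)))),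
      ‖x‖ < r → x = 0 := by
  rcases F.eq_empty_or_nonempty with rfl | hFne
  · exact ⟨1, one_pos, by simp⟩
  have : DiscreteTopology Γ.toIntSubmodule := Γ.toIntSubmodule.discreteTopology_iff_norm.2 hdisc
  -- `instModuleFinite_of_discrete_submodule`: discrete subgroups of `ℝ^d` are finitely generated
  have hΓ : Γ.toIntSubmodule.FG := Module.Finite.iff_fg.1 inferInstance
  have hfg : (span ℤ (F + (Γ : Set (EuclideanSpace ℝ (Fin d))))).FG := by
    rw [← Γ.coe_toIntSubmodule, span_add_eq_sup hFne]
    exact (fg_span hF).sup hΓ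
  obtain ⟨L, _, hΘL⟩ := hA.exists_discrete_subset_saturation
  obtain ⟨n, hn⟩ := hfg.exists_smul_mem_of_le_saturation (span_le.2 hΘL)
  have := discreteTopology_of_zsmul_mem (nonZeroDivisors.coe_ne_zero n) hn
  rw [← span_int_eq_addSubgroupClosure]
  exact (discreteTopology_iff_norm _).1 this

/-- If `Γ` is a lattice (a discrete additive subgroup of `ℝ^d` spanning `ℝ^d`), `F` is a
finite set, and `Θ = F + Γ` satisfies Condition A, then the additive subgroup generated by
`Θ` is discrete. -/
theorem stmt_4 (d : ℕ) (Γ : AddSubgroup (EuclideanSpace ℝ (Fin d)))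
    (hdisc : ∃ r > (0 : ℝ), ∀ x ∈ Γ, ‖x‖ < r → x = 0)
    (hspan : Submodule.span ℝ (Γ : Set (EuclideanSpace ℝ (Fin d))) = ⊤)
    (F : Set (EuclideanSpace ℝ (Fin d))) (hF : F.Finite)
    (hA : ConditionA (F + (Γ : Set (EuclideanSpace ℝ (Fin d))))) :
    ∃ r > (0 : ℝ), ∀ x ∈ AddSubgroup.closure (F + (Γ : Set (EuclideanSpace ℝ (Fin d)))),
      ‖x‖ < r → x = 0 :=
  stmt_4_general d Γ hdisc F hF hA
end

section
/- Let A^0 : ℝ² → ℝ be twice continuously differentiable, let λ ∈ ℝ, and suppose Σ := {ξ ∈ ℝ² : A^0(ξ) = λ} is nonempty and compact. Assume there is ε_0 > 0 with ‖∇A^0(ξ)‖ ≥ ε_0 for all ξ ∈ Σ, and there is ε > 0 such that for all ξ ∈ Σ and all η ∈ ℝ² with ⟨∇A^0(ξ), η⟩ = 0 one has |D²A^0(ξ)(η,η)| ≥ ε‖η‖². Then there is a constant C such that for every unit vector e ∈ ℝ² and every γ ∈ (0,1], the 1-dimensional Hausdorff measure of the set {ξ ∈ Σ : |⟨∇A^0(ξ),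 e⟩| ≤ γ} is at most Cγ. -/
/-!
Cover the compact curve `Σ = {f = λ}` by finitely many balls of a fixed radius `ρ`. On each
ball, `Σ` is a graph over the tangent line at the centre (the gradient barely moves), so the
projection to that line is injective with a 2-Lipschitz inverse and `μH[1]` of any piece of `Σ`
in the ball is at most twice its diameter. It remains to see that two near-tangency points `ξ, η`
of one ball are `O(γ)` apart. Both `η - ξ` (a chord of `Σ`) and `e` (since `∂ₑf` is small) are
almost tangent at `ξ`, so by strong convexity `|D²f(ξ)(η - ξ, e)| ≳ ε‖η - ξ‖`, while Taylor's
formula for `∂ₑf` bounds the same quantity by `2γ + o(‖η - ξ‖)`.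
-/

open MeasureTheory Set Metric Module
open scoped ENNReal NNReal RealInnerProductSpace

theorem hausdorffMeasure_one_le_mul_ediam {X : Type*} [MetricSpace X] [MeasurableSpace X]
    [BorelSpace X] {F : Set X} {p : X → ℝ} {K : ℝ≥0}
    (hp : LipschitzWith 1 p) (hK : ∀ x ∈ F, ∀ y ∈ F, dist x y ≤ K * dist (p x) (p y)) :
    μH[1] F ≤ K * ediam F := by
  have hanti : AntilipschitzWith K (F.domRestrict p) :=
    AntilipschitzWith.of_le_mul_dist fun x y => hK x x.2 y y.2
  calc μH[1] F = μH[1] (univ : Set F) := by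
        rw [← (isometry_subtype_coe (s := F)).hausdorffMeasure_image (Or.inl zero_le_one),
          image_univ, Subtype.range_coe]
    _ ≤ K * μH[1] (F.domRestrict p '' univ) := by
        simpa using hanti.le_hausdorffMeasure_image zero_le_one univ
    _ ≤ K * ediam F := by
        gcongr
        rw [image_univ, range_domRestrict, hausdorffMeasure_real]
        exact (Real.volume_le_diam _).trans (by simpa using hp.ediam_image_le F)

theorem IsCompact.exists_pos_forall_dist_lt {α β : Type*} [PseudoMetricSpace α]
    [PseudoMetricSpace β] {K : Set α} (hK : IsCompact K) {g : α → β} (hg : Continuous g)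
    {ε : ℝ} (hε : 0 < ε) : ∃ δ > 0, ∀ x ∈ K, ∀ y, dist x y < δ → dist (g x) (g y) < ε := by
  obtain ⟨δ, hδ, h⟩ := Metric.mem_uniformity_dist.1 <|
    hK.uniformContinuousAt_of_continuousAt g (fun x _ => hg.continuousAt) (dist_mem_uniformity hε)
  exact ⟨δ, hδ, fun x hx y hxy => h hxy hx⟩

theorem ContinuousLinearMap.abs_apply_apply_sub_le {E : Type*} [NormedAddCommGroup E]
    [NormedSpace ℝ E] (Q : E →L[ℝ] E →L[ℝ] ℝ) (v e T : E) (a α : ℝ) :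
    |Q v e - a * α * Q T T| ≤ ‖Q‖ * (‖v - a • T‖ * ‖e‖ + ‖a • T‖ * ‖e - α • T‖) := by
  have hsplit : Q v e - a * α * Q T T = Q (v - a • T) e + Q (a • T) (e - α • T) := by
    simp only [map_sub, map_smul, _root_.sub_apply, _root_.smul_apply, smul_eq_mul]
    ring
  rw [hsplit, mul_add, ← mul_assoc, ← mul_assoc]
  refine (abs_add_le _ _).trans (add_le_add ?_ ?_) <;>
    exact (Real.norm_eq_abs _).symm.trans_le (Q.le_opNorm₂ _ _)

section NormedSpace

variable {E : Type*} [NormedAddCommGroup E] [NormedSpace ℝ E]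

theorem Convex.abs_apply_sub_le_of_eq {s : Set E} (hs : Convex ℝ s) {f : E → ℝ}
    {L : StrongDual ℝ E} {δ : ℝ} (hf : ∀ z ∈ s, DifferentiableAt ℝ f z)
    (hδ : ∀ z ∈ s, ‖fderiv ℝ f z - L‖ ≤ δ) {x y : E} (hx : x ∈ s) (hy : y ∈ s)
    (hxy : f x = f y) : |L (y - x)| ≤ δ * ‖y - x‖ := by
  have h := hs.norm_image_sub_le_of_norm_fderiv_le' hf hδ hx hy
  rwa [hxy, sub_self, zero_sub, norm_neg, Real.norm_eq_abs] at h

/-- The paper's `Λ(θ) ∩ Σ_λ`, with the directional derivative `fderiv ℝ f ξ e` in place of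
`⟨∇f(ξ), e⟩`. -/
def nearTangencySet (f : E → ℝ) (lam : ℝ) (e : E) (γ : ℝ) : Set E :=
  {ξ | f ξ = lam ∧ |fderiv ℝ f ξ e| ≤ γ}

theorem exists_control_scales {f : E → ℝ} (hf : ContDiff ℝ 2 f) {S : Set E} (hS : IsCompact S)
    {ε₀ ε : ℝ} (hε₀ : 0 < ε₀) (hε : 0 < ε) :
    ∃ τ > 0, ∃ ρ > 0, τ ≤ 1 / 2 ∧ (∀ ξ ∈ S, ‖fderiv ℝ (fderiv ℝ f) ξ‖ * τ ≤ ε / 16) ∧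
      ∀ ξ ∈ S, ∀ z, dist ξ z < 2 * ρ → ‖fderiv ℝ f z - fderiv ℝ f ξ‖ ≤ τ * ε₀ ∧
        ‖fderiv ℝ (fderiv ℝ f) z - fderiv ℝ (fderiv ℝ f) ξ‖ ≤ ε / 16 := by
  have hDf : ContDiff ℝ 1 (fderiv ℝ f) := hf.fderiv_right (by norm_num)
  have hD2f : Continuous (fderiv ℝ (fderiv ℝ f)) := hDf.continuous_fderiv one_ne_zero
  obtain ⟨M, hM⟩ := hS.exists_bound_of_continuousOn (f := fderiv ℝ (fderiv ℝ f)) hD2f.continuousOn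
  set τ := min (1 / 2) (ε / (16 * (|M| + 1)))
  have hτ : 0 < τ := lt_min one_half_pos (by positivity)
  have hMτ : (|M| + 1) * τ ≤ ε / 16 := by
    calc (|M| + 1) * τ ≤ (|M| + 1) * (ε / (16 * (|M| + 1))) := by gcongr; exact min_le_right _ _
      _ = ε / 16 := by field_simp
  obtain ⟨δ₁, hδ₁, h₁⟩ :=
    hS.exists_pos_forall_dist_lt (g := fderiv ℝ f) hDf.continuous (mul_pos hτ hε₀)
  obtain ⟨δ₂, hδ₂, h₂⟩ := hS.exists_pos_forall_dist_lt (g := fderiv ℝ (fderiv ℝ f)) hD2f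
    (by positivity : 0 < ε / 16)
  refine ⟨τ, hτ, min δ₁ δ₂ / 2, by positivity, min_le_left _ _, fun ξ hξ => ?_, fun ξ hξ z hz => ?_⟩
  · calc ‖fderiv ℝ (fderiv ℝ f) ξ‖ * τ ≤ (|M| + 1) * τ := by
          gcongr; linarith [hM ξ hξ, le_abs_self M]
      _ ≤ ε / 16 := hMτ
  · rw [mul_div_cancel₀ _ two_ne_zero] at hz
    rw [← dist_eq_norm']
    exact ⟨(h₁ ξ hξ z (hz.trans_le (min_le_left _ _))).le,
      dist_eq_norm' (E := E →L[ℝ] E →L[ℝ] ℝ) _ _ ▸ (h₂ ξ hξ z (hz.trans_le (min_le_right _ _))).le⟩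

end NormedSpace

section Gradient

variable {F : Type*} [NormedAddCommGroup F] [InnerProductSpace ℝ F] [CompleteSpace F]

theorem inner_normalize_gradient_left (f : F → ℝ) (x w : F) :
    ⟪NormedSpace.normalize (gradient f x), w⟫ = fderiv ℝ f x w / ‖gradient f x‖ := by
  rw [NormedSpace.normalize, real_inner_smul_left, inner_gradient_left, inv_mul_eq_div]

theorem abs_inner_normalize_gradient_le {f : F → ℝ} {x : F} {ε₀ : ℝ} (hε₀ : 0 < ε₀)
    (hgrad : ε₀ ≤ ‖gradient f x‖) (w : F) :
    |⟪NormedSpace.normalize (gradient f x), w⟫| ≤ |fderiv ℝ f x w| / ε₀ := by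
  rw [inner_normalize_gradient_left, abs_div, abs_norm]
  exact div_le_div_of_nonneg_left (abs_nonneg _) hε₀ hgrad

end Gradient

section Plane

attribute [local instance] FiniteDimensional.of_fact_finrank_eq_two

variable {E : Type*} [NormedAddCommGroup E] [InnerProductSpace ℝ E] [Fact (finrank ℝ E = 2)]

section Orientation

variable (o : Orientation ℝ E (Fin 2)) {G : E}

local notation "J" => o.rightAngleRotation

theorem Orientation.inner_rightAngleRotation_sq_add_inner_sq (hG : ‖G‖ = 1) (v : E) :
    ⟪J G, v⟫ ^ 2 + ⟪G, v⟫ ^ 2 = ‖v‖ ^ 2 := by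
  have := o.inner_sq_add_areaForm_sq G v
  rw [hG, o.inner_rightAngleRotation_left] at *
  linarith

theorem Orientation.norm_sub_inner_rightAngleRotation_smul (hG : ‖G‖ = 1) (v : E) :
    ‖v - ⟪J G, v⟫ • J G‖ = |⟪G, v⟫| := by
  have hJG : ‖J G‖ = 1 := by simpa using hG
  rw [← sq_eq_sq₀ (norm_nonneg _) (abs_nonneg _), sq_abs, norm_sub_sq_real, norm_smul, hJG,
    real_inner_smul_right, real_inner_comm (J G) v, Real.norm_eq_abs, mul_one, sq_abs]
  linarith [o.inner_rightAngleRotation_sq_add_inner_sq hG v]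

theorem Orientation.norm_le_two_mul_abs_inner_rightAngleRotation (hG : ‖G‖ = 1) {v : E}
    (hv : |⟪G, v⟫| ≤ ‖v‖ / 2) : ‖v‖ ≤ 2 * |⟪J G, v⟫| := by
  have := o.inner_rightAngleRotation_sq_add_inner_sq hG v
  have : ⟪G, v⟫ ^ 2 ≤ (‖v‖ / 2) ^ 2 := by
    rw [← sq_abs]; exact pow_le_pow_left₀ (abs_nonneg _) hv 2
  nlinarith [abs_nonneg ⟪J G, v⟫, sq_abs ⟪J G, v⟫, norm_nonneg v]

theorem Orientation.abs_inner_rightAngleRotation_le (hG : ‖G‖ = 1) (v : E) :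
    |⟪J G, v⟫| ≤ ‖v‖ := by
  exact (abs_real_inner_le_norm _ _).trans_eq (by rw [LinearIsometryEquiv.norm_map, hG, one_mul])

theorem Orientation.mul_norm_le_abs_apply_apply (Q : E →L[ℝ] E →L[ℝ] ℝ) (hG : ‖G‖ = 1)
    {e v : E} (he : ‖e‖ = 1) {ε τ : ℝ} (hQ : ε ≤ |Q (J G) (J G)|) (hτ : τ ≤ 1 / 2)
    (hτQ : ‖Q‖ * τ ≤ ε / 16) (hv : |⟪G, v⟫| ≤ τ * ‖v‖) (he' : |⟪G, e⟫| ≤ τ) :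
    ε * ‖v‖ ≤ 8 * |Q v e| := by
  set a := ⟪J G, v⟫
  set α := ⟪J G, e⟫
  have hτ₀ : 0 ≤ τ := (abs_nonneg _).trans he'
  have hε : 0 ≤ ε := by linarith [mul_nonneg (norm_nonneg Q) hτ₀]
  have ha : ‖v‖ ≤ 2 * |a| := o.norm_le_two_mul_abs_inner_rightAngleRotation hG
    (hv.trans (by nlinarith [norm_nonneg v]))
  have hα : 1 ≤ 2 * |α| := he ▸ o.norm_le_two_mul_abs_inner_rightAngleRotation hG (by linarith)
  have herr : |Q v e - a * α * Q (J G) (J G)| ≤ ε / 8 * ‖v‖ := by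
    refine (Q.abs_apply_apply_sub_le v e (J G) a α).trans ?_
    rw [o.norm_sub_inner_rightAngleRotation_smul hG, o.norm_sub_inner_rightAngleRotation_smul hG,
      norm_smul, Real.norm_eq_abs, he, LinearIsometryEquiv.norm_map, hG, mul_one, mul_one]
    calc ‖Q‖ * (|⟪G, v⟫| + |a| * |⟪G, e⟫|) ≤ ‖Q‖ * (τ * ‖v‖ + ‖v‖ * τ) := by
          gcongr; exact o.abs_inner_rightAngleRotation_le hG v
      _ = 2 * (‖Q‖ * τ) * ‖v‖ := by ring
      _ ≤ 2 * (ε / 16) * ‖v‖ := by gcongr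
      _ = ε / 8 * ‖v‖ := by ring
  have hmain : ε * ‖v‖ ≤ 4 * |a * α * Q (J G) (J G)| := by
    calc ε * ‖v‖ ≤ ε * (2 * |a| * (2 * |α|)) := by
          gcongr; exact ha.trans (le_mul_of_one_le_right (by positivity) hα)
      _ = 4 * (|a| * |α| * ε) := by ring
      _ ≤ 4 * |a * α * Q (J G) (J G)| := by rw [abs_mul, abs_mul]; gcongr
  linarith [abs_sub_abs_le_abs_sub (a * α * Q (J G) (J G)) (Q v e), abs_sub_comm (Q v e)
    (a * α * Q (J G) (J G))]

theorem Orientation.norm_sub_le_two_mul_abs_inner_tangent {f : E → ℝ} {x : E} {ρ : ℝ}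
    (hf : ∀ z ∈ ball x ρ, DifferentiableAt ℝ f z)
    (hclose : ∀ z ∈ ball x ρ, ‖fderiv ℝ f z - fderiv ℝ f x‖ ≤ ‖gradient f x‖ / 2)
    (hx : gradient f x ≠ 0) {ξ η : E} (hξ : ξ ∈ ball x ρ) (hη : η ∈ ball x ρ)
    (hfeq : f ξ = f η) : ‖η - ξ‖ ≤ 2 * |⟪J (NormedSpace.normalize (gradient f x)), η - ξ⟫| := by
  refine o.norm_le_two_mul_abs_inner_rightAngleRotation
    (NormedSpace.norm_normalize_eq_one_iff.2 hx) ?_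
  have hnorm : 0 < ‖gradient f x‖ := norm_pos_iff.2 hx
  rw [inner_normalize_gradient_left, abs_div, abs_norm, div_le_iff₀ hnorm]
  calc |fderiv ℝ f x (η - ξ)| ≤ ‖gradient f x‖ / 2 * ‖η - ξ‖ :=
        (convex_ball x ρ).abs_apply_sub_le_of_eq hf hclose hξ hη hfeq
    _ = ‖η - ξ‖ / 2 * ‖gradient f x‖ := by ring

end Orientation

theorem mul_dist_le_of_abs_fderiv_apply_le {f : E → ℝ} (hf : ContDiff ℝ 2 f) {ξ η e : E}
    {ε₀ ε τ γ : ℝ} (hε₀ : 0 < ε₀) (hgrad : ε₀ ≤ ‖gradient f ξ‖)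
    (hconv : ∀ w : E, ⟪gradient f ξ, w⟫ = 0 → ε * ‖w‖ ^ 2 ≤ |iteratedFDeriv ℝ 2 f ξ ![w, w]|)
    (hτ : τ ≤ 1 / 2) (hτQ : ‖fderiv ℝ (fderiv ℝ f) ξ‖ * τ ≤ ε / 16)
    (hD1 : ∀ z ∈ segment ℝ ξ η, ‖fderiv ℝ f z - fderiv ℝ f ξ‖ ≤ τ * ε₀)
    (hD2 : ∀ z ∈ segment ℝ ξ η,
      ‖fderiv ℝ (fderiv ℝ f) z - fderiv ℝ (fderiv ℝ f) ξ‖ ≤ ε / 16)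
    (hfeq : f ξ = f η) (he : ‖e‖ = 1) (hγ : γ ≤ τ * ε₀)
    (hξe : |fderiv ℝ f ξ e| ≤ γ) (hηe : |fderiv ℝ f η e| ≤ γ) :
    ε * dist ξ η ≤ 32 * γ := by
  set G := NormedSpace.normalize (gradient f ξ)
  have hG : ‖G‖ = 1 :=
    NormedSpace.norm_normalize_eq_one_iff.2 (norm_pos_iff.1 (hε₀.trans_le hgrad))
  have hDf : ContDiff ℝ 1 (fderiv ℝ f) := hf.fderiv_right (by norm_num)
  have hseg : Convex ℝ (segment ℝ ξ η) := convex_segment ξ η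
  have hξs := left_mem_segment ℝ ξ η
  have hηs := right_mem_segment ℝ ξ η
  have hv : |⟪G, η - ξ⟫| ≤ τ * ‖η - ξ‖ := by
    refine (abs_inner_normalize_gradient_le hε₀ hgrad _).trans ((div_le_iff₀ hε₀).2 ?_)
    calc |fderiv ℝ f ξ (η - ξ)| ≤ τ * ε₀ * ‖η - ξ‖ :=
          hseg.abs_apply_sub_le_of_eq (fun z _ => (hf.differentiable (by norm_num)).differentiableAt)
            hD1 hξs hηs hfeq
      _ = τ * ‖η - ξ‖ * ε₀ := by ring
  have he' : |⟪G, e⟫| ≤ τ := (abs_inner_normalize_gradient_le hε₀ hgrad e).trans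
    ((div_le_iff₀ hε₀).2 (hξe.trans hγ))
  have hQ : |fderiv ℝ (fderiv ℝ f) ξ (η - ξ) e| ≤ 2 * γ + ε / 16 * ‖η - ξ‖ := by
    have hTaylor := hseg.norm_image_sub_le_of_norm_fderiv_le'
      (fun z _ => (hDf.differentiable one_ne_zero).differentiableAt) hD2 hξs hηs
    have hTaylor_e : |fderiv ℝ f η e - fderiv ℝ f ξ e - fderiv ℝ (fderiv ℝ f) ξ (η - ξ) e| ≤
        ε / 16 * ‖η - ξ‖ := by
      simpa [he] using ((fderiv ℝ f η - fderiv ℝ f ξ - fderiv ℝ (fderiv ℝ f) ξ (η - ξ)).le_opNorm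
        e).trans (mul_le_mul_of_nonneg_right hTaylor (norm_nonneg e))
    linarith [abs_sub (fderiv ℝ f η e) (fderiv ℝ f ξ e), abs_sub_comm
      (fderiv ℝ (fderiv ℝ f) ξ (η - ξ) e) (fderiv ℝ f η e - fderiv ℝ f ξ e),
      abs_sub_abs_le_abs_sub (fderiv ℝ (fderiv ℝ f) ξ (η - ξ) e) (fderiv ℝ f η e - fderiv ℝ f ξ e)]
  let o : Orientation ℝ E (Fin 2) := (finBasisOfFinrankEq ℝ E Fact.out).orientation
  have hT : ε ≤ |fderiv ℝ (fderiv ℝ f) ξ (o.rightAngleRotation G) (o.rightAngleRotation G)| := by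
    have hperp : ⟪gradient f ξ, o.rightAngleRotation G⟫ = 0 := by
      simp only [G, NormedSpace.normalize, map_smul, real_inner_smul_right,
        o.inner_rightAngleRotation_right, o.areaForm_apply_self, neg_zero, mul_zero]
    simpa [hG, iteratedFDeriv_two_apply] using hconv _ hperp
  have := o.mul_norm_le_abs_apply_apply _ hG he hT hτ hτQ hv he'
  rw [dist_comm, dist_eq_norm]
  linarith

theorem hausdorffMeasure_le_two_mul_ediam_of_subset_ball [MeasurableSpace E] [BorelSpace E]
    {f : E → ℝ} {x : E} {ρ : ℝ} (hf : ∀ z ∈ ball x ρ, DifferentiableAt ℝ f z)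
    (hclose : ∀ z ∈ ball x ρ, ‖fderiv ℝ f z - fderiv ℝ f x‖ ≤ ‖gradient f x‖ / 2)
    (hx : gradient f x ≠ 0) {lam : ℝ} {F : Set E} (hF : F ⊆ {ξ | f ξ = lam} ∩ ball x ρ) :
    μH[1] F ≤ 2 * ediam F := by
  let o : Orientation ℝ E (Fin 2) := (finBasisOfFinrankEq ℝ E Fact.out).orientation
  set T := o.rightAngleRotation (NormedSpace.normalize (gradient f x))
  have hT : ‖T‖ = 1 := by
    rw [LinearIsometryEquiv.norm_map, NormedSpace.norm_normalize_eq_one_iff.2 hx]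
  have hp : LipschitzWith 1 fun y => ⟪T, y⟫ := LipschitzWith.of_dist_le_mul fun y z => by
    rw [Real.dist_eq, ← inner_sub_right, dist_eq_norm, NNReal.coe_one, one_mul]
    exact (abs_real_inner_le_norm _ _).trans_eq (by rw [hT, one_mul])
  have := hausdorffMeasure_one_le_mul_ediam (K := 2) hp fun ξ hξ η hη => by
    rw [dist_eq_norm, Real.dist_eq, ← inner_sub_right, NNReal.coe_ofNat]
    exact o.norm_sub_le_two_mul_abs_inner_tangent hf hclose hx (hF hη).2 (hF hξ).2
      ((hF hη).1.trans (hF hξ).1.symm)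
  exact_mod_cast this

theorem ediam_nearTangencySet_inter_ball_le {f : E → ℝ} (hf : ContDiff ℝ 2 f)
    {lam ε₀ ε τ ρ : ℝ} (hε₀ : 0 < ε₀) (hε : 0 < ε) (hτ₀ : 0 < τ)
    (hgrad : ∀ ξ, f ξ = lam → ε₀ ≤ ‖gradient f ξ‖)
    (hconv : ∀ ξ, f ξ = lam → ∀ w : E, ⟪gradient f ξ, w⟫ = 0 →
      ε * ‖w‖ ^ 2 ≤ |iteratedFDeriv ℝ 2 f ξ ![w, w]|)
    (hτ : τ ≤ 1 / 2) (hτQ : ∀ ξ, f ξ = lam → ‖fderiv ℝ (fderiv ℝ f) ξ‖ * τ ≤ ε / 16)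
    (hclose : ∀ ξ, f ξ = lam → ∀ z, dist ξ z < 2 * ρ →
      ‖fderiv ℝ f z - fderiv ℝ f ξ‖ ≤ τ * ε₀ ∧
        ‖fderiv ℝ (fderiv ℝ f) z - fderiv ℝ (fderiv ℝ f) ξ‖ ≤ ε / 16)
    {e : E} (he : ‖e‖ = 1) {γ : ℝ} (hγ : 0 < γ) (x : E) :
    ediam (nearTangencySet f lam e γ ∩ ball x ρ) ≤
      ENNReal.ofReal (max (32 / ε) (2 * ρ / (τ * ε₀)) * γ) := by
  refine ediam_le fun p ⟨⟨hp, hpe⟩, hpx⟩ q ⟨⟨hq, hqe⟩, hqx⟩ => ?_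
  rw [edist_dist]
  refine ENNReal.ofReal_le_ofReal ?_
  have hpq : dist p q < 2 * ρ := (dist_triangle_right p q x).trans_lt
    (by linarith [mem_ball.1 hpx, mem_ball.1 hqx])
  have hseg : ∀ z ∈ segment ℝ p q, dist p z < 2 * ρ := fun z hz =>
    (le_of_add_le_of_nonneg_left (dist_add_dist_of_mem_segment hz).le dist_nonneg).trans_lt hpq
  by_cases hsmall : γ ≤ τ * ε₀
  · have := mul_dist_le_of_abs_fderiv_apply_le hf hε₀ (hgrad p hp) (hconv p hp) hτ (hτQ p hp)
      (fun z hz => (hclose p hp z (hseg z hz)).1) (fun z hz => (hclose p hp z (hseg z hz)).2)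
      (hp.trans hq.symm) he hsmall hpe hqe
    calc dist p q ≤ 32 / ε * γ := by rw [div_mul_eq_mul_div, le_div_iff₀ hε]; linarith
      _ ≤ _ := by gcongr; exact le_max_left _ _
  · calc dist p q ≤ 2 * ρ / (τ * ε₀) * (τ * ε₀) := by
          rw [div_mul_cancel₀ _ (by positivity)]; exact hpq.le
      _ ≤ _ := by gcongr; exacts [le_max_right _ _, (not_le.1 hsmall).le]

theorem exists_hausdorffMeasure_nearTangencySet_le [MeasurableSpace E] [BorelSpace E]
    {f : E → ℝ} (hf : ContDiff ℝ 2 f) {lam : ℝ} (hS : IsCompact {ξ | f ξ = lam})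
    {ε₀ : ℝ} (hε₀ : 0 < ε₀) (hgrad : ∀ ξ, f ξ = lam → ε₀ ≤ ‖gradient f ξ‖)
    {ε : ℝ} (hε : 0 < ε)
    (hconv : ∀ ξ, f ξ = lam → ∀ w : E, ⟪gradient f ξ, w⟫ = 0 →
      ε * ‖w‖ ^ 2 ≤ |iteratedFDeriv ℝ 2 f ξ ![w, w]|) :
    ∃ C : ℝ, ∀ e : E, ‖e‖ = 1 → ∀ γ, 0 < γ →
      μH[1] (nearTangencySet f lam e γ) ≤ ENNReal.ofReal (C * γ) := by
  obtain ⟨τ, hτ₀, ρ, hρ, hτ, hτQ, hclose⟩ := exists_control_scales hf hS hε₀ hε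
  obtain ⟨t, ht, hcover⟩ :=
    hS.elim_nhds_subcover (fun x => ball x ρ) fun x _ => ball_mem_nhds x hρ
  set K := max (32 / ε) (2 * ρ / (τ * ε₀))
  refine ⟨2 * t.card * K, fun e he γ hγ => ?_⟩
  set N := nearTangencySet f lam e γ
  have hpiece : ∀ x ∈ t, μH[1] (N ∩ ball x ρ) ≤ 2 * ENNReal.ofReal (K * γ) := fun x hx => by
    have hgx := hgrad x (ht x hx)
    refine (hausdorffMeasure_le_two_mul_ediam_of_subset_ball
      (fun z _ => (hf.differentiable (by norm_num)).differentiableAt) (fun z hz => ?_)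
      (norm_pos_iff.1 (hε₀.trans_le hgx)) (fun ξ hξ => ⟨hξ.1.1, hξ.2⟩)).trans ?_
    · refine (hclose x (ht x hx) z ?_).1.trans (by nlinarith)
      linarith [mem_ball'.1 hz]
    · gcongr
      exact ediam_nearTangencySet_inter_ball_le hf hε₀ hε hτ₀ hgrad hconv hτ hτQ hclose he hγ x
  calc μH[1] N ≤ μH[1] (⋃ x ∈ t, N ∩ ball x ρ) := by
        rw [← inter_iUnion₂]
        exact measure_mono fun ξ hξ => ⟨hξ, hcover hξ.1⟩
    _ ≤ ∑ x ∈ t, μH[1] (N ∩ ball x ρ) := measure_biUnion_finset_le t _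
    _ ≤ ∑ _x ∈ t, 2 * ENNReal.ofReal (K * γ) := Finset.sum_le_sum hpiece
    _ = ENNReal.ofReal (2 * t.card * K * γ) := by
        rw [Finset.sum_const, nsmul_eq_mul, mul_assoc 2 _ K, mul_assoc, mul_assoc,
          ENNReal.ofReal_mul zero_le_two, ENNReal.ofReal_mul t.card.cast_nonneg,
          ENNReal.ofReal_natCast, ENNReal.ofReal_ofNat]
        ring

end Plane

theorem stmt_14_general (A0 : EuclideanSpace ℝ (Fin 2) → ℝ) (hA0 : ContDiff ℝ 2 A0)
    (lam : ℝ)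
    (hcpt : IsCompact {ξ : EuclideanSpace ℝ (Fin 2) | A0 ξ = lam})
    (ε₀ : ℝ) (hε₀ : 0 < ε₀)
    (hgrad : ∀ ξ, A0 ξ = lam → ε₀ ≤ ‖gradient A0 ξ‖)
    (ε : ℝ) (hε : 0 < ε)
    (hconv : ∀ ξ, A0 ξ = lam → ∀ η : EuclideanSpace ℝ (Fin 2),
      (inner ℝ (gradient A0 ξ) η : ℝ) = 0 →
        ε * ‖η‖ ^ 2 ≤ |iteratedFDeriv ℝ 2 A0 ξ ![η, η]|) :
    ∃ C : ℝ, ∀ e : EuclideanSpace ℝ (Fin 2), ‖e‖ = 1 →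
      ∀ γ ∈ Set.Ioc (0:ℝ) 1,
        μH[1] {ξ : EuclideanSpace ℝ (Fin 2) |
            A0 ξ = lam ∧ |(inner ℝ (gradient A0 ξ) e : ℝ)| ≤ γ} ≤
          ENNReal.ofReal (C * γ) := by
  have : Fact (finrank ℝ (EuclideanSpace ℝ (Fin 2)) = 2) := ⟨finrank_euclideanSpace_fin⟩
  obtain ⟨C, hC⟩ := exists_hausdorffMeasure_nearTangencySet_le hA0 hcpt hε₀ hgrad hε hconv
  refine ⟨C, fun e he γ hγ => ?_⟩
  simpa only [nearTangencySet, inner_gradient_left] using hC e he γ hγ.1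

/-- For a strongly convex energy level curve `Σ = {A⁰ = λ}` in dimension 2 (microhyperbolic:
`‖∇A⁰‖ ≥ ε₀` on `Σ`; strongly convex: `|D²A⁰(η,η)| ≥ ε‖η‖²` on tangent vectors), the
arc-length (1-dimensional Hausdorff) measure of the near-tangency set
`{ξ ∈ Σ : |⟨∇A⁰(ξ), e⟩| ≤ γ}` is `O(γ)`, uniformly in the unit vector `e`. -/
theorem stmt_14 (A0 : EuclideanSpace ℝ (Fin 2) → ℝ) (hA0 : ContDiff ℝ 2 A0)
    (lam : ℝ)
    (hne : {ξ : EuclideanSpace ℝ (Fin 2) | A0 ξ = lam}.Nonempty)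
    (hcpt : IsCompact {ξ : EuclideanSpace ℝ (Fin 2) | A0 ξ = lam})
    (ε₀ : ℝ) (hε₀ : 0 < ε₀)
    (hgrad : ∀ ξ, A0 ξ = lam → ε₀ ≤ ‖gradient A0 ξ‖)
    (ε : ℝ) (hε : 0 < ε)
    (hconv : ∀ ξ, A0 ξ = lam → ∀ η : EuclideanSpace ℝ (Fin 2),
      (inner ℝ (gradient A0 ξ) η : ℝ) = 0 →
        ε * ‖η‖ ^ 2 ≤ |iteratedFDeriv ℝ 2 A0 ξ ![η, η]|) :
    ∃ C : ℝ, ∀ e : EuclideanSpace ℝ (Fin 2), ‖e‖ = 1 →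
      ∀ γ ∈ Set.Ioc (0:ℝ) 1,
        μH[1] {ξ : EuclideanSpace ℝ (Fin 2) |
            A0 ξ = lam ∧ |(inner ℝ (gradient A0 ξ) e : ℝ)| ≤ γ} ≤
          ENNReal.ofReal (C * γ) :=
  stmt_14_general A0 hA0 lam hcpt ε₀ hε₀ hgrad ε hε hconv
end
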